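/- arXiv:1408.2631 — 4 statements merged into one kernel-verified Lean document; each statement's English description precedes it below -/
import Mathlib

section
/- Let (s_t)_{t≥0} be a semigroup of isometries on a Hilbert C*-module E. Define E_u := ⋂_{t≥0} s_t E. Then E_u is a closed submodule with s_t E_u = E_u for all t ≥ 0, and for any closed submodule E' with s_t E' = E' for all t ≥ 0, one has E' ⊆ E_u. -/
open scoped RightActions
open MeasureTheory Filter Topology

noncomputable section

/-- The Hilbert C⋆-module class as defined in the older Mathlib (right `Aᵐᵒᵖ`-action). -/
class CStarModuleOld (A E : Type*) [NonUnitalSemiring A] [StarRing A] [Module ℂ A]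
    [AddCommGroup E] [Module ℂ E] [PartialOrder A] [SMul Aᵐᵒᵖ E] [Norm A] [Norm E]
    extends Inner A E where
  inner_add_right {x} {y} {z} : inner x (y + z) = inner x y + inner x z
  inner_self_nonneg {x} : 0 ≤ inner x x
  inner_self {x} : inner x x = 0 ↔ x = 0
  inner_op_smul_right {a : A} {x y : E} : inner x (y <• a) = inner x y * a
  inner_smul_right_complex {z : ℂ} {x} {y} : inner x (z • y) = z • inner x y
  star_inner x y : star (inner x y) = inner y x
  norm_eq_sqrt_norm_inner_self x : ‖x‖ = √‖inner x x‖

variable {A E : Type*} [CStarAlgebra A] [PartialOrder A] [StarOrderedRing A]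
  [NormedAddCommGroup E] [NormedSpace ℂ E] [SMul Aᵐᵒᵖ E] [CStarModuleOld A E]

local notation "⟪" x ", " y "⟫" => (inner A x y : A)

variable (A) in
/-- Orthogonal complement of a subset of a Hilbert C*-module. -/
def ortho (F : Set E) : Set E := {x : E | ∀ y ∈ F, ⟪y, x⟫ = 0}

/-! Every `s_t` is an isometry, hence injective with closed range, and `s_t ∘ s_r = s_r ∘ s_t`
maps the range of `s_r` into itself. So `s_t` maps `E_u = ⋂_r s_r E` into itself, and onto it:
if `x = s_t y ∈ E_u`, then writing `x = s_{t+r} z = s_t (s_r z)` shows `y = s_r z` by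
injectivity. A set `F` with `s_t F = F` lies in every range `s_t E`. -/

section UnitaryPart

variable {α : Type*}

def unitaryPart (s : ℝ → α → α) : Set α := ⋂ t ∈ Set.Ici (0 : ℝ), Set.range (s t)

variable {s : ℝ → α → α}

lemma mem_unitaryPart {x : α} : x ∈ unitaryPart s ↔ ∀ t, 0 ≤ t → x ∈ Set.range (s t) := by
  simp only [unitaryPart, Set.mem_iInter, Set.mem_Ici]

lemma mapsTo_range_of_semigroup (hsg : ∀ r t : ℝ, 0 ≤ r → 0 ≤ t → s (r + t) = s r ∘ s t)
    {r t : ℝ} (hr : 0 ≤ r) (ht : 0 ≤ t) :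
    Set.MapsTo (s t) (Set.range (s r)) (Set.range (s r)) := by
  rintro _ ⟨z, rfl⟩
  refine ⟨s t z, ?_⟩
  rw [← Function.comp_apply (f := s r), ← hsg r t hr ht, add_comm, hsg t r ht hr,
    Function.comp_apply]

lemma image_unitaryPart (hsg : ∀ r t : ℝ, 0 ≤ r → 0 ≤ t → s (r + t) = s r ∘ s t)
    (hinj : ∀ t, 0 ≤ t → Function.Injective (s t)) {t : ℝ} (ht : 0 ≤ t) :
    s t '' unitaryPart s = unitaryPart s := by
  refine (Set.MapsTo.image_subset fun x hx => ?_).antisymm fun x hx => ?_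
  · exact mem_unitaryPart.2 fun r hr =>
      mapsTo_range_of_semigroup hsg hr ht (mem_unitaryPart.1 hx r hr)
  · obtain ⟨y, rfl⟩ := mem_unitaryPart.1 hx t ht
    refine ⟨y, mem_unitaryPart.2 fun r hr => ?_, rfl⟩
    obtain ⟨z, hz⟩ := mem_unitaryPart.1 hx (t + r) (add_nonneg ht hr)
    rw [hsg t r ht hr, Function.comp_apply] at hz
    exact ⟨z, hinj t ht hz⟩

lemma subset_unitaryPart {F : Set α} (hF : ∀ t, 0 ≤ t → s t '' F = F) : F ⊆ unitaryPart s :=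
  fun x hx => mem_unitaryPart.2 fun t ht =>
    Set.image_subset_range (s t) F (by rwa [hF t ht])

lemma isClosed_unitaryPart [TopologicalSpace α]
    (hs : ∀ t, 0 ≤ t → Topology.IsClosedEmbedding (s t)) :
    IsClosed (unitaryPart s) :=
  isClosed_biInter fun t ht => (hs t ht).isClosed_range

lemma exists_submodule_coe_eq_unitaryPart {R M : Type*} [Semiring R] [AddCommMonoid M]
    [Module R M] (s : ℝ → M →ₗ[R] M) :
    ∃ U : Submodule R M, (U : Set M) = unitaryPart fun t => s t :=
  ⟨⨅ t ∈ Set.Ici (0 : ℝ), LinearMap.range (s t), by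
    ext x
    simp only [unitaryPart, Submodule.coe_iInf, LinearMap.coe_range]⟩

end UnitaryPart

lemma norm_eq_of_inner_self_eq {A E F : Type*} [NonUnitalSemiring A] [StarRing A] [Module ℂ A]
    [PartialOrder A] [Norm A] [AddCommGroup E] [Module ℂ E] [SMul Aᵐᵒᵖ E] [Norm E]
    [CStarModuleOld A E] [AddCommGroup F] [Module ℂ F] [SMul Aᵐᵒᵖ F] [Norm F] [CStarModuleOld A F]
    {x : E} {y : F} (h : inner A x x = inner A y y) : ‖x‖ = ‖y‖ := by
  rw [CStarModuleOld.norm_eq_sqrt_norm_inner_self (A := A),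
    CStarModuleOld.norm_eq_sqrt_norm_inner_self (A := A) y, h]

lemma isometry_of_inner_map_self {A E F : Type*} [NonUnitalSemiring A]
    [StarRing A] [Module ℂ A] [PartialOrder A] [Norm A] [SeminormedAddCommGroup E] [Module ℂ E]
    [SMul Aᵐᵒᵖ E] [CStarModuleOld A E] [SeminormedAddCommGroup F] [Module ℂ F] [SMul Aᵐᵒᵖ F]
    [CStarModuleOld A F] (T : E →ₗ[ℂ] F) (hT : ∀ x, inner A (T x) (T x) = inner A x x) :
    Isometry T :=
  AddMonoidHomClass.isometry_of_norm T fun x => norm_eq_of_inner_self_eq (A := A) (hT x)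

theorem maximal_unitary_part_general
    [CompleteSpace E]
    (s : ℝ → E →ₗ[ℂ] E)
    (hsg : ∀ r t : ℝ, 0 ≤ r → 0 ≤ t → s (r + t) = (s r).comp (s t))
    (hiso : ∀ t : ℝ, 0 ≤ t → ∀ x y : E, ⟪s t x, s t y⟫ = ⟪x, y⟫) :
    IsClosed (⋂ t ∈ Set.Ici (0 : ℝ), Set.range (s t)) ∧
    (∃ Fu : Submodule ℂ E, (Fu : Set E) = ⋂ t ∈ Set.Ici (0 : ℝ), Set.range (s t)) ∧
    (∀ t : ℝ, 0 ≤ t →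
      s t '' (⋂ r ∈ Set.Ici (0 : ℝ), Set.range (s r)) = ⋂ r ∈ Set.Ici (0 : ℝ), Set.range (s r)) ∧
    (∀ F : Submodule ℂ E, IsClosed (F : Set E) → (∀ (a : A), ∀ x ∈ F, x <• a ∈ F) →
      (∀ t : ℝ, 0 ≤ t → s t '' (F : Set E) = (F : Set E)) →
      (F : Set E) ⊆ ⋂ t ∈ Set.Ici (0 : ℝ), Set.range (s t)) := by
  have hisom (t : ℝ) (ht : 0 ≤ t) : Isometry (s t) :=
    isometry_of_inner_map_self (A := A) (s t) fun x => hiso t ht x x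
  have hsg_coe (r t : ℝ) (hr : 0 ≤ r) (ht : 0 ≤ t) : ⇑(s (r + t)) = s r ∘ s t := by
    rw [hsg r t hr ht, LinearMap.coe_comp]
  exact ⟨isClosed_unitaryPart fun t ht => (hisom t ht).isClosedEmbedding,
    exists_submodule_coe_eq_unitaryPart s,
    fun t ht => image_unitaryPart hsg_coe (fun t ht => (hisom t ht).injective) ht,
    fun F _ _ hF => subset_unitaryPart hF⟩

theorem maximal_unitary_part
    [CompleteSpace E]
    (s : ℝ → E →ₗ[ℂ] E)
    (hs0 : s 0 = LinearMap.id)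
    (hsg : ∀ r t : ℝ, 0 ≤ r → 0 ≤ t → s (r + t) = (s r).comp (s t))
    (hiso : ∀ t : ℝ, 0 ≤ t → ∀ x y : E, ⟪s t x, s t y⟫ = ⟪x, y⟫) :
    IsClosed (⋂ t ∈ Set.Ici (0 : ℝ), Set.range (s t)) ∧
    (∃ Fu : Submodule ℂ E, (Fu : Set E) = ⋂ t ∈ Set.Ici (0 : ℝ), Set.range (s t)) ∧
    (∀ t : ℝ, 0 ≤ t →
      s t '' (⋂ r ∈ Set.Ici (0 : ℝ), Set.range (s r)) = ⋂ r ∈ Set.Ici (0 : ℝ), Set.range (s r)) ∧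
    (∀ F : Submodule ℂ E, IsClosed (F : Set E) → (∀ (a : A), ∀ x ∈ F, x <• a ∈ F) →
      (∀ t : ℝ, 0 ≤ t → s t '' (F : Set E) = (F : Set E)) →
      (F : Set E) ⊆ ⋂ t ∈ Set.Ici (0 : ℝ), Set.range (s t)) :=
  maximal_unitary_part_general s hsg hiso
end
end

section
/- Let (s_t)_{t≥0} be a semigroup of adjointable isometries on a Hilbert C*-module E and let E_p be the closure of ⋃_{r≥0} (s_r E)^⊥. Then each s_t^* maps E_p into E_p, and the restriction of (s_t) to E_p is pure: s_t^* y → 0 as t → ∞ for every y ∈ E_p. -/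
/-!
Adjointness gives `s_t^* ((s_r E)^⊥) = 0` for `t ≥ r` (as `s_t E ⊆ s_r E`) and
`s_t^* ((s_r E)^⊥) ⊆ (s_{r-t} E)^⊥` for `t ≤ r` (as `s_r = s_t s_{r-t}`). Hence `s_t^*` preserves
the union of the `(s_r E)^⊥`, and by continuity its closure `E_p`. On the union, `s_t^* y` is
eventually `0`; since every `s_t^*` is a contraction, this convergence passes to the closure.
-/

open scoped RightActions
open MeasureTheory Filter Topology

noncomputable section

variable {A E : Type*} [CStarAlgebra A] [PartialOrder A] [StarOrderedRing A]
  [NormedAddCommGroup E] [NormedSpace ℂ E] [SMul Aᵐᵒᵖ E] [CStarModuleOld A E]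

local notation "⟪" x ", " y "⟫" => (inner A x y : A)

namespace CStarModuleOld

theorem inner_sub_right (x y z : E) : ⟪x, y - z⟫ = ⟪x, y⟫ - ⟪x, z⟫ := by
  rw [eq_sub_iff_add_eq, ← inner_add_right, sub_add_cancel]

theorem inner_zero_right (x : E) : ⟪x, 0⟫ = 0 := by
  simpa using inner_sub_right (A := A) x 0 0

theorem inner_sub_left (x y z : E) : ⟪x - y, z⟫ = ⟪x, z⟫ - ⟪y, z⟫ := by
  rw [← star_inner, inner_sub_right, star_sub, star_inner, star_inner]

theorem norm_le_norm_of_inner_self_le {x y : E} (h : ⟪x, x⟫ ≤ ⟪y, y⟫) : ‖x‖ ≤ ‖y‖ := by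
  rw [norm_eq_sqrt_norm_inner_self (A := A) x, norm_eq_sqrt_norm_inner_self (A := A) y]
  exact Real.sqrt_le_sqrt (CStarAlgebra.norm_le_norm_of_nonneg_of_le inner_self_nonneg h)

theorem norm_adjoint_apply_le {T T' : E → E} (hiso : ∀ x y, ⟪T x, T y⟫ = ⟪x, y⟫)
    (hadj : ∀ x y, ⟪T x, y⟫ = ⟪x, T' y⟫) (y : E) : ‖T' y‖ ≤ ‖y‖ := by
  have hleft : ⟪T (T' y), y⟫ = ⟪T' y, T' y⟫ := hadj _ _
  have hright : ⟪y, T (T' y)⟫ = ⟪T' y, T' y⟫ := by rw [← star_inner, hleft, star_inner]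
  -- `y - T T' y` is the component of `y` orthogonal to the range of `T`
  have hpyth : ⟪y - T (T' y), y - T (T' y)⟫ = ⟪y, y⟫ - ⟪T' y, T' y⟫ := by
    rw [inner_sub_left, inner_sub_right, inner_sub_right, hleft, hright, hiso]
    abel
  apply norm_le_norm_of_inner_self_le (A := A)
  rw [← sub_nonneg, ← hpyth]
  exact inner_self_nonneg

end CStarModuleOld

open CStarModuleOld

theorem ortho_anti {F G : Set E} (h : F ⊆ G) : ortho A G ⊆ ortho A F :=
  fun _ hx y hy => hx y (h hy)

theorem zero_mem_ortho (F : Set E) : (0 : E) ∈ ortho A F :=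
  fun y _ => inner_zero_right y

theorem adjoint_apply_eq_zero_of_mem_ortho_range {T T' : E → E}
    (hadj : ∀ x y, ⟪T x, y⟫ = ⟪x, T' y⟫) {z : E} (hz : z ∈ ortho A (Set.range T)) :
    T' z = 0 :=
  inner_self.mp <| (hadj _ _).symm.trans <| hz _ ⟨_, rfl⟩

theorem adjoint_mapsTo_ortho_range {T T' S R : E → E} (hadj : ∀ x y, ⟪T x, y⟫ = ⟪x, T' y⟫)
    (hTS : ∀ x, T (S x) = R x) :
    Set.MapsTo T' (ortho A (Set.range R)) (ortho A (Set.range S)) := by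
  rintro z hz _ ⟨x, rfl⟩
  rw [← hadj, hTS]
  exact hz _ ⟨x, rfl⟩

theorem tendsto_zero_of_mem_closure {ι G F H : Type*} [SeminormedAddCommGroup G]
    [SeminormedAddCommGroup H] [FunLike F G H] [AddMonoidHomClass F G H] {l : Filter ι}
    {T : ι → F} (hT : ∀ᶠ i in l, ∀ y, ‖T i y‖ ≤ ‖y‖) {U : Set G}
    (hU : ∀ z ∈ U, Tendsto (fun i => T i z) l (𝓝 0)) {y : G} (hy : y ∈ closure U) :
    Tendsto (fun i => T i y) l (𝓝 0) := by
  rw [Metric.tendsto_nhds]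
  intro ε hε
  obtain ⟨z, hzU, hyz⟩ := Metric.mem_closure_iff.mp hy (ε / 2) (half_pos hε)
  filter_upwards [hT, Metric.tendsto_nhds.mp (hU z hzU) (ε / 2) (half_pos hε)] with i hTi hzi
  rw [dist_zero_right] at hzi ⊢
  calc ‖T i y‖ = ‖T i (y - z) + T i z‖ := by rw [map_sub, sub_add_cancel]
    _ ≤ ‖y - z‖ + ‖T i z‖ := norm_add_le_of_le (hTi _) le_rfl
    _ < ε / 2 + ε / 2 := by rw [← dist_eq_norm]; gcongr
    _ = ε := add_halves ε

section Semigroup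

variable {s sa : ℝ → E →ₗ[ℂ] E}

theorem range_anti_of_semigroup
    (hsg : ∀ r t : ℝ, 0 ≤ r → 0 ≤ t → s (r + t) = (s r).comp (s t))
    {r t : ℝ} (hr : 0 ≤ r) (hrt : r ≤ t) : Set.range (s t) ⊆ Set.range (s r) := by
  rintro _ ⟨x, rfl⟩
  refine ⟨s (t - r) x, ?_⟩
  rw [← LinearMap.comp_apply, ← hsg r (t - r) hr (sub_nonneg.mpr hrt), add_sub_cancel]

theorem adjoint_semigroup_apply_eq_zero
    (hsg : ∀ r t : ℝ, 0 ≤ r → 0 ≤ t → s (r + t) = (s r).comp (s t))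
    (hadj : ∀ t : ℝ, 0 ≤ t → ∀ x y : E, ⟪s t x, y⟫ = ⟪x, sa t y⟫)
    {r t : ℝ} (hr : 0 ≤ r) (hrt : r ≤ t) {z : E} (hz : z ∈ ortho A (Set.range (s r))) :
    sa t z = 0 :=
  adjoint_apply_eq_zero_of_mem_ortho_range (hadj t (hr.trans hrt))
    (ortho_anti (range_anti_of_semigroup hsg hr hrt) hz)

theorem adjoint_semigroup_mapsTo_iUnion_ortho_range
    (hsg : ∀ r t : ℝ, 0 ≤ r → 0 ≤ t → s (r + t) = (s r).comp (s t))
    (hadj : ∀ t : ℝ, 0 ≤ t → ∀ x y : E, ⟪s t x, y⟫ = ⟪x, sa t y⟫) {t : ℝ} (ht : 0 ≤ t) :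
    Set.MapsTo (sa t) (⋃ r ∈ Set.Ici (0 : ℝ), ortho A (Set.range (s r)))
      (⋃ r ∈ Set.Ici (0 : ℝ), ortho A (Set.range (s r))) := by
  intro z hz
  simp only [Set.mem_iUnion, Set.mem_Ici] at hz ⊢
  obtain ⟨r, hr, hz⟩ := hz
  rcases le_total r t with hrt | htr
  · exact ⟨r, hr, adjoint_semigroup_apply_eq_zero hsg hadj hr hrt hz ▸ zero_mem_ortho _⟩
  · refine ⟨r - t, sub_nonneg.mpr htr, adjoint_mapsTo_ortho_range (hadj t ht) (fun x => ?_) hz⟩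
    rw [← LinearMap.comp_apply, ← hsg t (r - t) ht (sub_nonneg.mpr htr), add_sub_cancel]

end Semigroup

theorem restriction_to_pure_part_is_pure_general
    (s sa : ℝ → E →ₗ[ℂ] E)
    (hsg : ∀ r t : ℝ, 0 ≤ r → 0 ≤ t → s (r + t) = (s r).comp (s t))
    (hiso : ∀ t : ℝ, 0 ≤ t → ∀ x y : E, ⟪s t x, s t y⟫ = ⟪x, y⟫)
    (hadj : ∀ t : ℝ, 0 ≤ t → ∀ x y : E, ⟪s t x, y⟫ = ⟪x, sa t y⟫) :
    (∀ t : ℝ, 0 ≤ t →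
      sa t '' closure (⋃ r ∈ Set.Ici (0 : ℝ), ortho A (Set.range (s r))) ⊆
        closure (⋃ r ∈ Set.Ici (0 : ℝ), ortho A (Set.range (s r)))) ∧
    (∀ y ∈ closure (⋃ r ∈ Set.Ici (0 : ℝ), ortho A (Set.range (s r))),
      Tendsto (fun t : ℝ => sa t y) atTop (𝓝 0)) := by
  have hcontr : ∀ t, 0 ≤ t → ∀ y, ‖sa t y‖ ≤ ‖y‖ := fun t ht =>
    norm_adjoint_apply_le (A := A) (hiso t ht) (hadj t ht)
  refine ⟨fun t ht => ?_, fun y hy => ?_⟩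
  · have hcont : Continuous (sa t) :=
      AddMonoidHomClass.continuous_of_bound (sa t) 1 (by simpa using hcontr t ht)
    exact ((adjoint_semigroup_mapsTo_iUnion_ortho_range hsg hadj ht).closure hcont).image_subset
  · refine tendsto_zero_of_mem_closure (eventually_ge_atTop 0 |>.mono hcontr) (fun z hz => ?_) hy
    simp only [Set.mem_iUnion, Set.mem_Ici] at hz
    obtain ⟨r, hr, hz⟩ := hz
    exact tendsto_const_nhds.congr' <| (eventually_ge_atTop r).mono fun t hrt =>
      (adjoint_semigroup_apply_eq_zero hsg hadj hr hrt hz).symm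

theorem restriction_to_pure_part_is_pure
    [CompleteSpace E]
    (s sa : ℝ → E →ₗ[ℂ] E)
    (hs0 : s 0 = LinearMap.id)
    (hsg : ∀ r t : ℝ, 0 ≤ r → 0 ≤ t → s (r + t) = (s r).comp (s t))
    (hiso : ∀ t : ℝ, 0 ≤ t → ∀ x y : E, ⟪s t x, s t y⟫ = ⟪x, y⟫)
    (hadj : ∀ t : ℝ, 0 ≤ t → ∀ x y : E, ⟪s t x, y⟫ = ⟪x, sa t y⟫) :
    (∀ t : ℝ, 0 ≤ t →
      sa t '' closure (⋃ r ∈ Set.Ici (0 : ℝ), ortho A (Set.range (s r))) ⊆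
        closure (⋃ r ∈ Set.Ici (0 : ℝ), ortho A (Set.range (s r)))) ∧
    (∀ y ∈ closure (⋃ r ∈ Set.Ici (0 : ℝ), ortho A (Set.range (s r))),
      Tendsto (fun t : ℝ => sa t y) atTop (𝓝 0)) :=
  restriction_to_pure_part_is_pure_general s sa hsg hiso hadj
end
end

section
/- Let (s_t)_{t≥0} be a semigroup of adjointable isometries on a Hilbert C*-module E and let p_{a,b} := s_a s_a^* − s_b s_b^*, E_{a,b} := p_{a,b}E. For t ≥ 0 and 0 ≤ a < b, s_t restricts to a unitary from E_{a,b} onto E_{a+t, b+t}, with inverse given by the restriction of s_t^* to E_{a+t,b+t}. -/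
open scoped RightActions
open MeasureTheory Filter Topology

noncomputable section

variable {A E : Type*} [CStarAlgebra A] [PartialOrder A] [StarOrderedRing A]
  [NormedAddCommGroup E] [NormedSpace ℂ E] [SMul A E] [CStarModule A E]

local notation "⟪" x ", " y "⟫" => (inner A x y : A)

/-- The spectral projection family `p_{c,d} := s_c s_c^* - s_d s_d^*`, with the
convention `p_{c,d} := 0` for `c > d`. -/
def pab {E : Type*} [NormedAddCommGroup E] [NormedSpace ℂ E]
    (s sa : ℝ → E →ₗ[ℂ] E) (c d : ℝ) : E →ₗ[ℂ] E :=
  if c ≤ d then (s c).comp (sa c) - (s d).comp (sa d) else 0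

/-!
Write `q_c := s_c s_c^*`, so that `p_{a,b} = q_a - q_b`. From `s_t^* s_t = 1` and
`s_{c+t}^* = s_c^* s_t^*` one gets `s_t q_c = q_{c+t} s_t`, `s_t^* q_{c+t} = q_c s_t^*` and
`s_t s_t^* q_{c+t} = q_{c+t}`. Taking differences, the same relations hold for the `p`'s, and they
say exactly that `s_t` and `s_t^*` are mutually inverse between `p_{a,b}E` and `p_{a+t,b+t}E`.
-/

open scoped InnerProductSpace

section Adjoints

variable {B F : Type*} [NonUnitalRing B] [StarRing B] [Module ℂ B] [PartialOrder B] [Norm B]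
  [AddCommGroup F] [Module ℂ F] [Norm F] [SMul B F] [CStarModule B F] {v w : F →ₗ[ℂ] F}

lemma adjoint_comp {v' w' : F →ₗ[ℂ] F} (hw : ∀ x y : F, ⟪v x, y⟫_B = ⟪x, w y⟫_B)
    (hw' : ∀ x y : F, ⟪v' x, y⟫_B = ⟪x, w' y⟫_B) (x y : F) :
    ⟪(v.comp v') x, y⟫_B = ⟪x, (w'.comp w) y⟫_B := by
  rw [LinearMap.comp_apply, hw, hw', LinearMap.comp_apply]

variable [StarModule ℂ B]

lemma CStarModule.ext_inner_left {x y : F} (h : ∀ z : F, ⟪z, x⟫_B = ⟪z, y⟫_B) : x = y := by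
  have : ⟪x - y, x - y⟫_B = 0 := by
    rw [CStarModule.inner_sub_right, h, sub_self]
  exact sub_eq_zero.mp (CStarModule.inner_self.mp this)

lemma eq_of_adjoint {w' : F →ₗ[ℂ] F} (hw : ∀ x y : F, ⟪v x, y⟫_B = ⟪x, w y⟫_B)
    (hw' : ∀ x y : F, ⟪v x, y⟫_B = ⟪x, w' y⟫_B) : w = w' :=
  LinearMap.ext fun y => CStarModule.ext_inner_left (B := B) fun x => by
    rw [← hw, hw']

lemma comp_eq_id_of_isometry (hiso : ∀ x y : F, ⟪v x, v y⟫_B = ⟪x, y⟫_B)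
    (hadj : ∀ x y : F, ⟪v x, y⟫_B = ⟪x, w y⟫_B) : w.comp v = LinearMap.id :=
  LinearMap.ext fun x => CStarModule.ext_inner_left (B := B) fun y => by
    rw [LinearMap.comp_apply, LinearMap.id_apply, ← hadj, hiso]

end Adjoints

def rangeProj {F : Type*} [AddCommGroup F] [Module ℂ F] (s sa : ℝ → F →ₗ[ℂ] F) (c : ℝ) :
    F →ₗ[ℂ] F :=
  (s c).comp (sa c)

lemma pab_of_le {F : Type*} [NormedAddCommGroup F] [NormedSpace ℂ F] {s sa : ℝ → F →ₗ[ℂ] F}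
    {a b : ℝ} (hab : a ≤ b) : pab s sa a b = rangeProj s sa a - rangeProj s sa b :=
  if_pos hab

section IsometrySemigroup

variable {B F : Type*} [NonUnitalRing B] [StarRing B] [Module ℂ B] [StarModule ℂ B]
  [PartialOrder B] [Norm B] [AddCommGroup F] [Module ℂ F] [Norm F] [SMul B F] [CStarModule B F]
  {s sa : ℝ → F →ₗ[ℂ] F} {c t : ℝ}

lemma adjoint_add (hsg : ∀ r t : ℝ, 0 ≤ r → 0 ≤ t → s (r + t) = (s r).comp (s t))
    (hadj : ∀ t : ℝ, 0 ≤ t → ∀ x y : F, ⟪s t x, y⟫_B = ⟪x, sa t y⟫_B)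
    (hc : 0 ≤ c) (ht : 0 ≤ t) : sa (c + t) = (sa c).comp (sa t) :=
  eq_of_adjoint (hadj _ (add_nonneg hc ht)) <| by
    rw [add_comm, hsg t c ht hc]
    exact adjoint_comp (hadj t ht) (hadj c hc)

lemma adjoint_add_comp_shift (hsg : ∀ r t : ℝ, 0 ≤ r → 0 ≤ t → s (r + t) = (s r).comp (s t))
    (hiso : ∀ t : ℝ, 0 ≤ t → ∀ x y : F, ⟪s t x, s t y⟫_B = ⟪x, y⟫_B)
    (hadj : ∀ t : ℝ, 0 ≤ t → ∀ x y : F, ⟪s t x, y⟫_B = ⟪x, sa t y⟫_B)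
    (hc : 0 ≤ c) (ht : 0 ≤ t) : (sa (c + t)).comp (s t) = sa c := by
  rw [adjoint_add hsg hadj hc ht, LinearMap.comp_assoc,
    comp_eq_id_of_isometry (hiso t ht) (hadj t ht), LinearMap.comp_id]

lemma shift_comp_rangeProj (hsg : ∀ r t : ℝ, 0 ≤ r → 0 ≤ t → s (r + t) = (s r).comp (s t))
    (hiso : ∀ t : ℝ, 0 ≤ t → ∀ x y : F, ⟪s t x, s t y⟫_B = ⟪x, y⟫_B)
    (hadj : ∀ t : ℝ, 0 ≤ t → ∀ x y : F, ⟪s t x, y⟫_B = ⟪x, sa t y⟫_B)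
    (hc : 0 ≤ c) (ht : 0 ≤ t) :
    (s t).comp (rangeProj s sa c) = (rangeProj s sa (c + t)).comp (s t) := by
  rw [rangeProj, rangeProj, LinearMap.comp_assoc, adjoint_add_comp_shift hsg hiso hadj hc ht,
    add_comm, hsg t c ht hc, LinearMap.comp_assoc]

lemma adjoint_comp_rangeProj (hsg : ∀ r t : ℝ, 0 ≤ r → 0 ≤ t → s (r + t) = (s r).comp (s t))
    (hiso : ∀ t : ℝ, 0 ≤ t → ∀ x y : F, ⟪s t x, s t y⟫_B = ⟪x, y⟫_B)
    (hadj : ∀ t : ℝ, 0 ≤ t → ∀ x y : F, ⟪s t x, y⟫_B = ⟪x, sa t y⟫_B)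
    (hc : 0 ≤ c) (ht : 0 ≤ t) :
    (sa t).comp (rangeProj s sa (c + t)) = (rangeProj s sa c).comp (sa t) := by
  rw [rangeProj, rangeProj, adjoint_add hsg hadj hc ht, add_comm, hsg t c ht hc]
  ext y
  exact LinearMap.congr_fun (comp_eq_id_of_isometry (hiso t ht) (hadj t ht)) _

lemma shift_comp_adjoint_comp_rangeProj
    (hsg : ∀ r t : ℝ, 0 ≤ r → 0 ≤ t → s (r + t) = (s r).comp (s t))
    (hiso : ∀ t : ℝ, 0 ≤ t → ∀ x y : F, ⟪s t x, s t y⟫_B = ⟪x, y⟫_B)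
    (hadj : ∀ t : ℝ, 0 ≤ t → ∀ x y : F, ⟪s t x, y⟫_B = ⟪x, sa t y⟫_B)
    (hc : 0 ≤ c) (ht : 0 ≤ t) :
    ((s t).comp (sa t)).comp (rangeProj s sa (c + t)) = rangeProj s sa (c + t) := by
  rw [rangeProj, add_comm, hsg t c ht hc]
  ext y
  exact congrArg (s t) (LinearMap.congr_fun (comp_eq_id_of_isometry (hiso t ht) (hadj t ht)) _)

end IsometrySemigroup

section Pab

variable {B F : Type*} [NonUnitalRing B] [StarRing B] [Module ℂ B] [StarModule ℂ B]
  [PartialOrder B] [Norm B] [NormedAddCommGroup F] [NormedSpace ℂ F] [SMul B F]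
  [CStarModule B F] {s sa : ℝ → F →ₗ[ℂ] F} {t a b : ℝ}

lemma shift_comp_pab (hsg : ∀ r t : ℝ, 0 ≤ r → 0 ≤ t → s (r + t) = (s r).comp (s t))
    (hiso : ∀ t : ℝ, 0 ≤ t → ∀ x y : F, ⟪s t x, s t y⟫_B = ⟪x, y⟫_B)
    (hadj : ∀ t : ℝ, 0 ≤ t → ∀ x y : F, ⟪s t x, y⟫_B = ⟪x, sa t y⟫_B)
    (ht : 0 ≤ t) (ha : 0 ≤ a) (hab : a ≤ b) :
    (s t).comp (pab s sa a b) = (pab s sa (a + t) (b + t)).comp (s t) := by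
  rw [pab_of_le hab, pab_of_le (by linarith), LinearMap.comp_sub, LinearMap.sub_comp,
    shift_comp_rangeProj hsg hiso hadj ha ht, shift_comp_rangeProj hsg hiso hadj (ha.trans hab) ht]

lemma adjoint_comp_pab (hsg : ∀ r t : ℝ, 0 ≤ r → 0 ≤ t → s (r + t) = (s r).comp (s t))
    (hiso : ∀ t : ℝ, 0 ≤ t → ∀ x y : F, ⟪s t x, s t y⟫_B = ⟪x, y⟫_B)
    (hadj : ∀ t : ℝ, 0 ≤ t → ∀ x y : F, ⟪s t x, y⟫_B = ⟪x, sa t y⟫_B)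
    (ht : 0 ≤ t) (ha : 0 ≤ a) (hab : a ≤ b) :
    (sa t).comp (pab s sa (a + t) (b + t)) = (pab s sa a b).comp (sa t) := by
  rw [pab_of_le hab, pab_of_le (by linarith), LinearMap.comp_sub, LinearMap.sub_comp,
    adjoint_comp_rangeProj hsg hiso hadj ha ht,
    adjoint_comp_rangeProj hsg hiso hadj (ha.trans hab) ht]

lemma shift_comp_adjoint_comp_pab
    (hsg : ∀ r t : ℝ, 0 ≤ r → 0 ≤ t → s (r + t) = (s r).comp (s t))
    (hiso : ∀ t : ℝ, 0 ≤ t → ∀ x y : F, ⟪s t x, s t y⟫_B = ⟪x, y⟫_B)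
    (hadj : ∀ t : ℝ, 0 ≤ t → ∀ x y : F, ⟪s t x, y⟫_B = ⟪x, sa t y⟫_B)
    (ht : 0 ≤ t) (ha : 0 ≤ a) (hab : a ≤ b) :
    ((s t).comp (sa t)).comp (pab s sa (a + t) (b + t)) = pab s sa (a + t) (b + t) := by
  rw [pab_of_le (by linarith), LinearMap.comp_sub,
    shift_comp_adjoint_comp_rangeProj hsg hiso hadj ha ht,
    shift_comp_adjoint_comp_rangeProj hsg hiso hadj (ha.trans hab) ht]

end Pab

theorem shift_restricts_to_unitary_between_pab_ranges_general
    (s sa : ℝ → E →ₗ[ℂ] E)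
    (hsg : ∀ r t : ℝ, 0 ≤ r → 0 ≤ t → s (r + t) = (s r).comp (s t))
    (hiso : ∀ t : ℝ, 0 ≤ t → ∀ x y : E, ⟪s t x, s t y⟫ = ⟪x, y⟫)
    (hadj : ∀ t : ℝ, 0 ≤ t → ∀ x y : E, ⟪s t x, y⟫ = ⟪x, sa t y⟫)
    (t a b : ℝ) (ht : 0 ≤ t) (ha : 0 ≤ a) (hab : a < b) :
    (s t '' Set.range (pab s sa a b) = Set.range (pab s sa (a + t) (b + t))) ∧
    (∀ x ∈ Set.range (pab s sa a b), sa t (s t x) = x) ∧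
    (∀ y ∈ Set.range (pab s sa (a + t) (b + t)),
      sa t y ∈ Set.range (pab s sa a b) ∧ s t (sa t y) = y) := by
  have hinv : ∀ y ∈ Set.range (pab s sa (a + t) (b + t)),
      sa t y ∈ Set.range (pab s sa a b) ∧ s t (sa t y) = y := by
    rintro _ ⟨z, rfl⟩
    exact ⟨⟨sa t z, (LinearMap.congr_fun (adjoint_comp_pab hsg hiso hadj ht ha hab.le) z).symm⟩,
      LinearMap.congr_fun (shift_comp_adjoint_comp_pab hsg hiso hadj ht ha hab.le) z⟩
  refine ⟨Set.Subset.antisymm ?_ fun y hy => ⟨sa t y, hinv y hy⟩,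
    fun x _ => LinearMap.congr_fun (comp_eq_id_of_isometry (hiso t ht) (hadj t ht)) x, hinv⟩
  rintro _ ⟨_, ⟨w, rfl⟩, rfl⟩
  exact ⟨s t w, (LinearMap.congr_fun (shift_comp_pab hsg hiso hadj ht ha hab.le) w).symm⟩

theorem shift_restricts_to_unitary_between_pab_ranges
    (s sa : ℝ → E →ₗ[ℂ] E)
    (hs0 : s 0 = LinearMap.id)
    (hsg : ∀ r t : ℝ, 0 ≤ r → 0 ≤ t → s (r + t) = (s r).comp (s t))
    (hiso : ∀ t : ℝ, 0 ≤ t → ∀ x y : E, ⟪s t x, s t y⟫ = ⟪x, y⟫)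
    (hadj : ∀ t : ℝ, 0 ≤ t → ∀ x y : E, ⟪s t x, y⟫ = ⟪x, sa t y⟫)
    (t a b : ℝ) (ht : 0 ≤ t) (ha : 0 ≤ a) (hab : a < b) :
    (s t '' Set.range (pab s sa a b) = Set.range (pab s sa (a + t) (b + t))) ∧
    (∀ x ∈ Set.range (pab s sa a b), sa t (s t x) = x) ∧
    (∀ y ∈ Set.range (pab s sa (a + t) (b + t)),
      sa t y ∈ Set.range (pab s sa a b) ∧ s t (sa t y) = y) :=
  shift_restricts_to_unitary_between_pab_ranges_general s sa hsg hiso hadj t a b ht ha hab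
end
end

section
/- Let (s_t)_{t≥0} be a strongly continuous semigroup of adjointable isometries on a Hilbert C*-module E, and for 0 ≤ a < b define q_{a,b} x := (1/(b−a)) ∫_0^{b−a} u_t^{a,b} x dt, where u_t^{a,b} is the periodic shift unitary group on E_{a,b} = p_{a,b}E. Then u_r^{a,b} q_{a,b} = q_{a,b} for all real r, and q_{a,b} is an adjointable projection on E whose range is contained in the range of p_{a,b}. -/
open scoped RightActions
open MeasureTheory Filter Topology

noncomputable section

variable {A E : Type*} [CStarAlgebra A] [PartialOrder A] [StarOrderedRing A]
  [NormedAddCommGroup E] [NormedSpace ℂ E] [SMul A E] [CStarModule A E]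

local notation "⟪" x ", " y "⟫" => (inner A x y : A)

/-- The reduced time `t - n(b-a)` for `t ∈ [n(b-a), (n+1)(b-a))`. -/
def redt (a b t : ℝ) : ℝ := t - (b - a) * (⌊t / (b - a)⌋ : ℝ)

/-- The shift-modulo-`b-a` unitary group `u_t^{a,b} = s_τ p_{a,b-τ} + s_{b-a-τ}^* p_{b-τ,b}`
(with `τ := t - n(b-a)` the reduction of `t` modulo the period `b-a`). -/
def uab {E : Type*} [NormedAddCommGroup E] [NormedSpace ℂ E]
    (s sa : ℝ → E →ₗ[ℂ] E) (a b : ℝ) (t : ℝ) : E →ₗ[ℂ] E :=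
  (s (redt a b t)).comp (pab s sa a (b - redt a b t)) +
    (sa (b - a - redt a b t)).comp (pab s sa (b - redt a b t) b)
/-- The mean `q_{c,d} x := (d-c)⁻¹ ∫_0^{d-c} u_t^{c,d} x dt` of the periodic shift group
over one period (a Riemann/Bochner integral of a continuous function). -/
def qab {E : Type*} [NormedAddCommGroup E] [NormedSpace ℂ E]
    (s sa : ℝ → E →ₗ[ℂ] E) (c d : ℝ) (x : E) : E :=
  (d - c)⁻¹ • ∫ t in (0 : ℝ)..(d - c), uab s sa c d t x


/-!
On one period the shift has the closed form
`u_τ = s_{a+τ} (s_a^* - s_b^*) + (s_a - s_b) s_{b-τ}^*` (`0 ≤ τ ≤ b - a`), which is continuous in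
`τ` because `s^*` is strongly continuous as well. Multiplying out with `s_d^* s_c = s_{c-d}` for
`d ≤ c` and `= s_{d-c}^*` for `c ≤ d` gives `s_b^* u_τ = 0`, hence `p_{a,b} u_τ = u_τ`, the group
law `u_ρ u_τ = u_{ρ+τ mod (b-a)}` and `u_τ^* = u_{b-a-τ}`. Averaging the periodic group over a
period produces invariant vectors, so `u_r q = q` and `q² = q`; the substitution `τ ↦ b - a - τ`
makes `q` self-adjoint.
-/

open Set

namespace CStarModule

omit [StarOrderedRing A] in
lemma ext_inner_left_s15 {x y : E} (h : ∀ z : E, ⟪z, x⟫ = ⟪z, y⟫) : x = y := by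
  have h0 : ⟪x - y, x - y⟫ = 0 := by rw [inner_sub_right, h (x - y), sub_self]
  exact sub_eq_zero.mp (inner_self.mp h0)

variable [CompleteSpace E] {f : ℝ → E} {u v : ℝ}

lemma inner_intervalIntegral_right (hf : IntervalIntegrable f volume u v) (y : E) :
    ⟪y, ∫ t in u..v, f t⟫ = ∫ t in u..v, ⟪y, f t⟫ :=
  ((innerSL (A := A) (E := E) y).intervalIntegral_comp_comm hf).symm

lemma inner_intervalIntegral_left (hf : IntervalIntegrable f volume u v) (y : E) :
    ⟪∫ t in u..v, f t, y⟫ = ∫ t in u..v, ⟪f t, y⟫ := by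
  have h := ((starL' ℝ : A ≃L[ℝ] A).toContinuousLinearMap.comp
    ((innerSL (A := A) (E := E) y).restrictScalars ℝ)).intervalIntegral_comp_comm hf
  simpa only [ContinuousLinearMap.comp_apply, ContinuousLinearMap.coe_restrictScalars',
    innerSL_apply, ContinuousLinearEquiv.coe_coe, starL'_apply, star_inner] using h.symm

end CStarModule

lemma LinearMap.map_intervalIntegral_of_bound {F G : Type*} [NormedAddCommGroup F]
    [NormedSpace ℂ F] [CompleteSpace F] [NormedAddCommGroup G] [NormedSpace ℂ G]
    [CompleteSpace G] {g : F →ₗ[ℂ] G} {C : ℝ} (hg : ∀ z, ‖g z‖ ≤ C * ‖z‖) {f : ℝ → F}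
    {u v : ℝ} (hf : IntervalIntegrable f volume u v) :
    g (∫ t in u..v, f t) = ∫ t in u..v, g (f t) :=
  ((g.mkContinuous C hg).intervalIntegral_comp_comm hf).symm

lemma toIcoMod_add_toIcoMod {p : ℝ} (hp : 0 < p) (r t : ℝ) :
    toIcoMod hp 0 (toIcoMod hp 0 r + toIcoMod hp 0 t) = toIcoMod hp 0 (r + t) := by
  rw [← toIcoMod_add_zsmul hp 0 (r + t) (-(toIcoDiv hp 0 r + toIcoDiv hp 0 t))]
  simp only [toIcoMod, neg_zsmul, add_zsmul]
  abel_nf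

lemma redt_eq_toIcoMod {a b : ℝ} (hab : a < b) (t : ℝ) :
    redt a b t = toIcoMod (sub_pos.2 hab) 0 t := by
  rw [redt, toIcoMod, toIcoDiv_eq_floor, sub_zero, zsmul_eq_mul, mul_comm]

/-- `u_τ^{a,b} = s_τ p_{a,b-τ} + s_{b-a-τ}^* p_{b-τ,b}` multiplied out by the semigroup law,
valid for `τ ∈ [0, b - a]`. -/
def uabOnPeriod (s sa : ℝ → E →ₗ[ℂ] E) (a b τ : ℝ) (x : E) : E :=
  s (a + τ) (sa a x - sa b x) + (s a (sa (b - τ) x) - s b (sa (b - τ) x))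

lemma uabOnPeriod_period (s sa : ℝ → E →ₗ[ℂ] E) (a b : ℝ) (x : E) :
    uabOnPeriod s sa a b (b - a) x = uabOnPeriod s sa a b 0 x := by
  simp only [uabOnPeriod, map_sub, add_sub_cancel, sub_sub_cancel, add_zero, sub_zero]
  abel

lemma qab_smul (s sa : ℝ → E →ₗ[ℂ] E) (a b : ℝ) (c : ℂ) (x : E) :
    qab s sa a b (c • x) = c • qab s sa a b x := by
  simp only [qab, map_smul, intervalIntegral.integral_smul]
  rw [smul_comm]

lemma uab_periodic {s sa : ℝ → E →ₗ[ℂ] E} {a b : ℝ} (hab : a < b) (x : E) :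
    Function.Periodic (fun t => uab s sa a b t x) (b - a) := fun t => by
  simp only [uab, redt_eq_toIcoMod hab, toIcoMod_add_right]

variable (A) in
structure IsIsometrySemigroup (s sa : ℝ → E →ₗ[ℂ] E) : Prop where
  s_zero_eq : s 0 = LinearMap.id
  s_add : ∀ r t : ℝ, 0 ≤ r → 0 ≤ t → s (r + t) = (s r).comp (s t)
  inner_map_map : ∀ t : ℝ, 0 ≤ t → ∀ x y : E, ⟪s t x, s t y⟫ = ⟪x, y⟫
  inner_map_left : ∀ t : ℝ, 0 ≤ t → ∀ x y : E, ⟪s t x, y⟫ = ⟪x, sa t y⟫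
  continuousOn : ∀ x : E, ContinuousOn (fun t : ℝ => s t x) (Ici 0)

namespace IsIsometrySemigroup

variable {s sa : ℝ → E →ₗ[ℂ] E} (H : IsIsometrySemigroup A s sa) {a b : ℝ}
include H

section

omit [StarOrderedRing A]

lemma s_zero (x : E) : s 0 x = x := by rw [H.s_zero_eq, LinearMap.id_apply]

-- The exponent `e` is a separate argument so that a rewrite can give it in the normal form
-- the goal needs, with `he` discharged by `ring`.
lemma s_s {c d e : ℝ} (hc : 0 ≤ c) (hd : 0 ≤ d) (he : e = c + d) (x : E) :
    s c (s d x) = s e x := by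
  rw [he, H.s_add c d hc hd, LinearMap.comp_apply]

lemma inner_adjoint_left {t : ℝ} (ht : 0 ≤ t) (x y : E) : ⟪sa t x, y⟫ = ⟪x, s t y⟫ := by
  rw [← CStarModule.star_inner, ← H.inner_map_left t ht, CStarModule.star_inner]

lemma sa_s_self {t : ℝ} (ht : 0 ≤ t) (x : E) : sa t (s t x) = x :=
  CStarModule.ext_inner_left_s15 fun z => by rw [← H.inner_map_left t ht, H.inner_map_map t ht]

lemma sa_s_of_le {c d e : ℝ} (hd : 0 ≤ d) (hdc : d ≤ c) (he : e = c - d) (x : E) :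
    sa d (s c x) = s e x := by
  rw [← H.s_s hd (by linarith : 0 ≤ e) (by linarith : c = d + e), H.sa_s_self hd]

lemma sa_s_of_ge {c d e : ℝ} (hc : 0 ≤ c) (hcd : c ≤ d) (he : e = d - c) (x : E) :
    sa d (s c x) = sa e x :=
  CStarModule.ext_inner_left_s15 fun z => by
    rw [← H.inner_map_left d (by linarith), ← H.s_s hc (by linarith : 0 ≤ e)
      (by linarith : d = c + e), H.inner_map_map c hc, H.inner_map_left e (by linarith)]

lemma sa_sa {c d e : ℝ} (hc : 0 ≤ c) (hd : 0 ≤ d) (he : e = c + d) (x : E) :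
    sa c (sa d x) = sa e x :=
  CStarModule.ext_inner_left_s15 fun z => by
    rw [← H.inner_map_left c hc, ← H.inner_map_left d hd, H.s_s hd hc (by linarith : e = d + c),
      H.inner_map_left e (by linarith)]

lemma norm_s {t : ℝ} (ht : 0 ≤ t) (x : E) : ‖s t x‖ = ‖x‖ := by
  rw [CStarModule.norm_eq_sqrt_norm_inner_self (A := A), H.inner_map_map t ht,
    ← CStarModule.norm_eq_sqrt_norm_inner_self (A := A)]

lemma continuous_s {t : ℝ} (ht : 0 ≤ t) : Continuous (s t) :=
  AddMonoidHomClass.continuous_of_bound (s t) 1 fun y => by rw [H.norm_s ht, one_mul]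

lemma uab_eq_uabOnPeriod_toIcoMod (ha : 0 ≤ a) (hab : a < b) (t : ℝ) (x : E) :
    uab s sa a b t x = uabOnPeriod s sa a b (toIcoMod (sub_pos.2 hab) 0 t) x := by
  obtain ⟨hτ0, hτL⟩ := toIcoMod_mem_Ico' (sub_pos.2 hab) t
  simp only [uab, redt_eq_toIcoMod hab]
  set τ := toIcoMod (sub_pos.2 hab) 0 t
  simp only [pab, if_pos (by linarith : a ≤ b - τ), if_pos (by linarith : b - τ ≤ b),
    LinearMap.add_apply, LinearMap.comp_apply, LinearMap.sub_apply, map_sub]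
  rw [H.s_s hτ0 ha (by ring : a + τ = τ + a), H.s_s hτ0 (by linarith) (by ring : b = τ + (b - τ)),
    H.sa_s_of_le (by linarith) (by linarith) (by ring : a = b - τ - (b - a - τ)),
    H.sa_s_of_le (by linarith) (by linarith) (by ring : a + τ = b - (b - a - τ))]
  simp only [uabOnPeriod, map_sub]
  abel

lemma uab_eq_uabOnPeriod (ha : 0 ≤ a) (hab : a < b) {t : ℝ} (ht : t ∈ Icc 0 (b - a)) (x : E) :
    uab s sa a b t x = uabOnPeriod s sa a b t x := by
  rw [H.uab_eq_uabOnPeriod_toIcoMod ha hab]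
  rcases ht.2.eq_or_lt with rfl | hlt
  · have h := toIcoMod_apply_right (sub_pos.2 hab) 0
    rw [zero_add] at h
    rw [h, uabOnPeriod_period]
  · rw [(toIcoMod_eq_self _).2 ⟨ht.1, by rwa [zero_add]⟩]

lemma sa_b_uabOnPeriod (ha : 0 ≤ a) (hab : a < b) {τ : ℝ} (hτ0 : 0 ≤ τ) (hτL : τ ≤ b - a) (x : E) :
    sa b (uabOnPeriod s sa a b τ x) = 0 := by
  simp only [uabOnPeriod, map_add, map_sub]
  rw [H.sa_s_of_ge (by linarith : (0:ℝ) ≤ a + τ) (by linarith : a + τ ≤ b) (e := b - a - τ)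
      (by ring) (sa a x),
    H.sa_s_of_ge (by linarith : (0:ℝ) ≤ a + τ) (by linarith : a + τ ≤ b) (e := b - a - τ)
      (by ring) (sa b x),
    H.sa_sa (by linarith : (0:ℝ) ≤ b - a - τ) ha (e := b - τ) (by ring) x,
    H.sa_sa (by linarith : (0:ℝ) ≤ b - a - τ) (by linarith : (0:ℝ) ≤ b) (e := 2*b - a - τ)
      (by ring) x,
    H.sa_s_of_ge ha (by linarith : a ≤ b) (e := b - a) (by ring) (sa (b - τ) x),
    H.sa_sa (by linarith : (0:ℝ) ≤ b - a) (by linarith : (0:ℝ) ≤ b - τ) (e := 2*b - a - τ)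
      (by ring) x,
    H.sa_s_self (by linarith : (0:ℝ) ≤ b) (sa (b - τ) x)]
  abel

lemma sa_a_uabOnPeriod (ha : 0 ≤ a) (hab : a < b) {τ : ℝ} (hτ0 : 0 ≤ τ) (x : E) :
    sa a (uabOnPeriod s sa a b τ x)
      = s τ (sa a x) - s τ (sa b x) + (sa (b - τ) x - s (b - a) (sa (b - τ) x)) := by
  simp only [uabOnPeriod, map_add, map_sub]
  rw [H.sa_s_of_le ha (by linarith : a ≤ a + τ) (e := τ) (by ring) (sa a x),
    H.sa_s_of_le ha (by linarith : a ≤ a + τ) (e := τ) (by ring) (sa b x),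
    H.sa_s_self ha (sa (b - τ) x),
    H.sa_s_of_le ha (by linarith : a ≤ b) (e := b - a) (by ring) (sa (b - τ) x)]

lemma sa_sub_uabOnPeriod_of_add_lt (ha : 0 ≤ a) {ρ τ : ℝ} (hρ0 : 0 ≤ ρ) (hτ0 : 0 ≤ τ)
    (hc : ρ + τ < b - a) (x : E) :
    sa (b - ρ) (uabOnPeriod s sa a b τ x)
      = sa (b - (ρ + τ)) x - s ρ (sa (b - τ) x) := by
  simp only [uabOnPeriod, map_add, map_sub]
  rw [H.sa_s_of_ge (by linarith : (0:ℝ) ≤ a + τ) (by linarith : a + τ ≤ b - ρ) (e := b - ρ - a - τ)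
      (by ring) (sa a x),
    H.sa_s_of_ge (by linarith : (0:ℝ) ≤ a + τ) (by linarith : a + τ ≤ b - ρ) (e := b - ρ - a - τ)
      (by ring) (sa b x),
    H.sa_sa (by linarith : (0:ℝ) ≤ b - ρ - a - τ) ha (e := b - (ρ + τ)) (by ring) x,
    H.sa_sa (by linarith : (0:ℝ) ≤ b - ρ - a - τ) (by linarith : (0:ℝ) ≤ b)
      (e := 2*b - a - ρ - τ) (by ring) x,
    H.sa_s_of_ge ha (by linarith : a ≤ b - ρ) (e := b - ρ - a) (by ring) (sa (b - τ) x),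
    H.sa_sa (by linarith : (0:ℝ) ≤ b - ρ - a) (by linarith : (0:ℝ) ≤ b - τ)
      (e := 2*b - a - ρ - τ) (by ring) x,
    H.sa_s_of_le (by linarith : (0:ℝ) ≤ b - ρ) (by linarith : b - ρ ≤ b) (e := ρ)
      (by ring) (sa (b - τ) x)]
  abel

lemma sa_sub_uabOnPeriod_of_le_add (ha : 0 ≤ a) {ρ τ σ : ℝ} (hρL : ρ < b - a)
    (hτL : τ < b - a) (hσ : σ = ρ + τ - (b - a)) (hσ0 : 0 ≤ σ) (x : E) :
    sa (b - ρ) (uabOnPeriod s sa a b τ x)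
      = s σ (sa a x) - s σ (sa b x) + (sa (b - σ) x - s ρ (sa (b - τ) x)) := by
  simp only [uabOnPeriod, map_add, map_sub]
  rw [H.sa_s_of_le (by linarith : (0:ℝ) ≤ b - ρ) (by linarith : b - ρ ≤ a + τ) (e := σ)
      (by rw [hσ]; ring) (sa a x),
    H.sa_s_of_le (by linarith : (0:ℝ) ≤ b - ρ) (by linarith : b - ρ ≤ a + τ) (e := σ)
      (by rw [hσ]; ring) (sa b x),
    H.sa_s_of_ge ha (by linarith : a ≤ b - ρ) (e := b - ρ - a) (by ring) (sa (b - τ) x),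
    H.sa_sa (by linarith : (0:ℝ) ≤ b - ρ - a) (by linarith : (0:ℝ) ≤ b - τ)
      (e := b - σ) (by rw [hσ]; ring) x,
    H.sa_s_of_le (by linarith : (0:ℝ) ≤ b - ρ) (by linarith : b - ρ ≤ b) (e := ρ)
      (by ring) (sa (b - τ) x)]

lemma uabOnPeriod_uabOnPeriod_of_add_lt (ha : 0 ≤ a) (hab : a < b) {ρ τ : ℝ} (hρ0 : 0 ≤ ρ)
    (hτ0 : 0 ≤ τ) (hc : ρ + τ < b - a) (x : E) :
    uabOnPeriod s sa a b ρ (uabOnPeriod s sa a b τ x) = uabOnPeriod s sa a b (ρ + τ) x := by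
  conv_lhs => rw [uabOnPeriod]
  rw [H.sa_a_uabOnPeriod ha hab hτ0 x, H.sa_b_uabOnPeriod ha hab hτ0 (by linarith) x,
    H.sa_sub_uabOnPeriod_of_add_lt ha hρ0 hτ0 hc x]
  simp only [map_add, map_sub, sub_zero]
  rw [H.s_s (by linarith : (0:ℝ) ≤ a + ρ) hτ0 (e := a + (ρ + τ)) (by ring) (sa a x),
    H.s_s (by linarith : (0:ℝ) ≤ a + ρ) hτ0 (e := a + (ρ + τ)) (by ring) (sa b x),
    H.s_s (by linarith : (0:ℝ) ≤ a + ρ) (by linarith : (0:ℝ) ≤ b - a) (e := b + ρ)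
      (by ring) (sa (b - τ) x),
    H.s_s ha hρ0 (e := a + ρ) (by ring) (sa (b - τ) x),
    H.s_s (by linarith : (0:ℝ) ≤ b) hρ0 (e := b + ρ) (by ring) (sa (b - τ) x)]
  simp only [uabOnPeriod, map_sub]
  abel

lemma uabOnPeriod_uabOnPeriod_of_le_add (ha : 0 ≤ a) (hab : a < b) {ρ τ σ : ℝ} (hρ0 : 0 ≤ ρ)
    (hρL : ρ < b - a) (hτ0 : 0 ≤ τ) (hτL : τ < b - a) (hσ : σ = ρ + τ - (b - a))
    (hσ0 : 0 ≤ σ) (x : E) :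
    uabOnPeriod s sa a b ρ (uabOnPeriod s sa a b τ x) = uabOnPeriod s sa a b σ x := by
  conv_lhs => rw [uabOnPeriod]
  rw [H.sa_a_uabOnPeriod ha hab hτ0 x, H.sa_b_uabOnPeriod ha hab hτ0 hτL.le x,
    H.sa_sub_uabOnPeriod_of_le_add ha hρL hτL hσ hσ0 x]
  simp only [map_add, map_sub, sub_zero]
  rw [H.s_s (by linarith : (0:ℝ) ≤ a + ρ) hτ0 (e := b + σ) (by rw [hσ]; ring) (sa a x),
    H.s_s (by linarith : (0:ℝ) ≤ a + ρ) hτ0 (e := b + σ) (by rw [hσ]; ring) (sa b x),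
    H.s_s (by linarith : (0:ℝ) ≤ a + ρ) (by linarith : (0:ℝ) ≤ b - a) (e := b + ρ)
      (by ring) (sa (b - τ) x),
    H.s_s ha hσ0 (e := a + σ) (by ring) (sa a x),
    H.s_s ha hσ0 (e := a + σ) (by ring) (sa b x),
    H.s_s ha hρ0 (e := a + ρ) (by ring) (sa (b - τ) x),
    H.s_s (by linarith : (0:ℝ) ≤ b) hσ0 (e := b + σ) (by ring) (sa a x),
    H.s_s (by linarith : (0:ℝ) ≤ b) hσ0 (e := b + σ) (by ring) (sa b x),
    H.s_s (by linarith : (0:ℝ) ≤ b) hρ0 (e := b + ρ) (by ring) (sa (b - τ) x)]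
  simp only [uabOnPeriod, map_sub]
  abel

lemma uab_uab (ha : 0 ≤ a) (hab : a < b) (r t : ℝ) (x : E) :
    uab s sa a b r (uab s sa a b t x) = uab s sa a b (r + t) x := by
  have hp := sub_pos.2 hab
  rw [H.uab_eq_uabOnPeriod_toIcoMod ha hab t, H.uab_eq_uabOnPeriod_toIcoMod ha hab r,
    H.uab_eq_uabOnPeriod_toIcoMod ha hab (r + t), ← toIcoMod_add_toIcoMod hp]
  obtain ⟨hρ0, hρL⟩ := toIcoMod_mem_Ico' hp r
  obtain ⟨hτ0, hτL⟩ := toIcoMod_mem_Ico' hp t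
  set ρ := toIcoMod hp 0 r
  set τ := toIcoMod hp 0 t
  rcases lt_or_ge (ρ + τ) (b - a) with hc | hc
  · rw [H.uabOnPeriod_uabOnPeriod_of_add_lt ha hab hρ0 hτ0 hc,
      (toIcoMod_eq_self hp).2 ⟨by linarith, by rwa [zero_add]⟩]
  · have hσ : toIcoMod hp 0 (ρ + τ) = ρ + τ - (b - a) :=
      (toIcoMod_eq_iff hp).2 ⟨⟨by linarith, by linarith⟩, 1, by rw [one_zsmul]; ring⟩
    rw [H.uabOnPeriod_uabOnPeriod_of_le_add ha hab hρ0 hρL hτ0 hτL hσ (by linarith)]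

lemma inner_uabOnPeriod_left (ha : 0 ≤ a) (hab : a < b) {τ : ℝ} (hτ0 : 0 ≤ τ)
    (hτL : τ ≤ b - a) (x y : E) :
    ⟪uabOnPeriod s sa a b τ x, y⟫ = ⟪x, uabOnPeriod s sa a b (b - a - τ) y⟫ := by
  rw [uabOnPeriod, uabOnPeriod, show a + (b - a - τ) = b - τ by ring,
    show b - (b - a - τ) = a + τ by ring]
  simp only [map_sub, CStarModule.inner_add_left, CStarModule.inner_sub_left,
    CStarModule.inner_add_right, CStarModule.inner_sub_right]
  rw [H.inner_map_left (a + τ) (by linarith), H.inner_map_left (a + τ) (by linarith),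
    H.inner_map_left a ha, H.inner_map_left b (by linarith),
    H.inner_adjoint_left ha, H.inner_adjoint_left (t := b) (by linarith),
    H.inner_adjoint_left (t := b - τ) (by linarith),
    H.inner_adjoint_left (t := b - τ) (by linarith)]
  abel

lemma pab_uabOnPeriod (ha : 0 ≤ a) (hab : a < b) {τ : ℝ} (hτ0 : 0 ≤ τ) (hτL : τ ≤ b - a)
    (x : E) : pab s sa a b (uabOnPeriod s sa a b τ x) = uabOnPeriod s sa a b τ x := by
  simp only [pab, if_pos hab.le, LinearMap.sub_apply, LinearMap.comp_apply]
  rw [H.sa_b_uabOnPeriod ha hab hτ0 hτL x, map_zero, sub_zero, H.sa_a_uabOnPeriod ha hab hτ0 x]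
  simp only [map_add, map_sub]
  rw [H.s_s ha hτ0 (e := a + τ) (by ring), H.s_s ha hτ0 (e := a + τ) (by ring),
    H.s_s ha (by linarith) (e := b) (by ring)]
  simp only [uabOnPeriod, map_sub]

lemma qab_eq_integral_uabOnPeriod (ha : 0 ≤ a) (hab : a < b) (x : E) :
    qab s sa a b x = (b - a)⁻¹ • ∫ t in (0 : ℝ)..(b - a), uabOnPeriod s sa a b t x := by
  rw [qab, intervalIntegral.integral_congr fun t ht => H.uab_eq_uabOnPeriod ha hab
    (by rwa [uIcc_of_le (sub_pos.2 hab).le] at ht) x]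

end

lemma norm_sa_le {t : ℝ} (ht : 0 ≤ t) (x : E) : ‖sa t x‖ ≤ ‖x‖ := by
  have h : ‖sa t x‖ ^ 2 ≤ ‖sa t x‖ * ‖x‖ := by
    rw [CStarModule.norm_sq_eq (A := A), ← H.inner_map_left t ht, ← H.norm_s ht (sa t x)]
    exact CStarModule.norm_inner_le E
  nlinarith [norm_nonneg (sa t x), norm_nonneg x]

lemma norm_sa_sub_sa_le {c c' : ℝ} (hc' : 0 ≤ c') (hcc : c' ≤ c) (x : E) :
    ‖sa c x - sa c' x‖ ≤ ‖s (c - c') x - x‖ :=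
  calc ‖sa c x - sa c' x‖ = ‖sa c' (sa (c - c') (x - s (c - c') x))‖ := by
        rw [map_sub, map_sub, H.sa_s_self (by linarith), H.sa_sa hc' (by linarith)
          (by ring : c = c' + (c - c'))]
    _ ≤ ‖x - s (c - c') x‖ :=
        (H.norm_sa_le hc' _).trans (H.norm_sa_le (by linarith) _)
    _ = ‖s (c - c') x - x‖ := norm_sub_rev _ _

lemma continuousOn_sa (x : E) : ContinuousOn (fun t : ℝ => sa t x) (Ici 0) := by
  intro t₀ ht₀
  have hs : Tendsto (fun h : ℝ => ‖s h x - x‖) (𝓝[Ici 0] 0) (𝓝 0) := by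
    have h := (H.continuousOn x 0 self_mem_Ici).tendsto
    rw [H.s_zero] at h
    simpa using (h.sub_const x).norm
  have hd : Tendsto (fun t : ℝ => |t - t₀|) (𝓝[Ici 0] t₀) (𝓝[Ici 0] 0) := by
    refine tendsto_nhdsWithin_iff.2 ⟨?_, Eventually.of_forall fun _ => mem_Ici.2 (abs_nonneg _)⟩
    simpa using ((continuous_sub_right t₀).abs.tendsto t₀).mono_left
      (nhdsWithin_le_nhds (s := Ici 0))
  refine tendsto_iff_norm_sub_tendsto_zero.2
    (squeeze_zero' (Eventually.of_forall fun _ => norm_nonneg _) ?_ (hs.comp hd))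
  filter_upwards [self_mem_nhdsWithin] with t (ht : 0 ≤ t)
  rcases le_total t₀ t with h | h
  · simpa [abs_of_nonneg (sub_nonneg.2 h)] using H.norm_sa_sub_sa_le ht₀ h x
  · simpa [abs_of_nonpos (sub_nonpos.2 h), norm_sub_rev] using H.norm_sa_sub_sa_le ht h x

lemma norm_s_sa_le {c d : ℝ} (hc : 0 ≤ c) (hd : 0 ≤ d) (x : E) : ‖s c (sa d x)‖ ≤ ‖x‖ := by
  rw [H.norm_s hc]
  exact H.norm_sa_le hd x

lemma norm_pab_le (ha : 0 ≤ a) (hab : a < b) (x : E) : ‖pab s sa a b x‖ ≤ 2 * ‖x‖ := by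
  simp only [pab, if_pos hab.le, LinearMap.sub_apply, LinearMap.comp_apply]
  linarith [norm_sub_le (s a (sa a x)) (s b (sa b x)), H.norm_s_sa_le ha ha x,
    H.norm_s_sa_le (ha.trans hab.le) (ha.trans hab.le) x]

lemma norm_uabOnPeriod_le (ha : 0 ≤ a) (hab : a < b) {τ : ℝ} (hτ0 : 0 ≤ τ) (hτL : τ ≤ b - a)
    (x : E) : ‖uabOnPeriod s sa a b τ x‖ ≤ 4 * ‖x‖ := by
  have hle : ‖uabOnPeriod s sa a b τ x‖ ≤ ‖s (a + τ) (sa a x)‖ + ‖s (a + τ) (sa b x)‖ +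
      (‖s a (sa (b - τ) x)‖ + ‖s b (sa (b - τ) x)‖) := by
    rw [uabOnPeriod, map_sub]
    exact norm_add_le_of_le (norm_sub_le _ _) (norm_sub_le _ _)
  linarith [H.norm_s_sa_le (c := a + τ) (by linarith) ha x,
    H.norm_s_sa_le (c := a + τ) (d := b) (by linarith) (by linarith) x,
    H.norm_s_sa_le (d := b - τ) ha (by linarith) x,
    H.norm_s_sa_le (c := b) (d := b - τ) (by linarith) (by linarith) x]

lemma norm_uab_le (ha : 0 ≤ a) (hab : a < b) (t : ℝ) (x : E) :
    ‖uab s sa a b t x‖ ≤ 4 * ‖x‖ := by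
  obtain ⟨hτ0, hτL⟩ := toIcoMod_mem_Ico' (sub_pos.2 hab) t
  rw [H.uab_eq_uabOnPeriod_toIcoMod ha hab]
  exact H.norm_uabOnPeriod_le ha hab hτ0 hτL.le x

lemma continuousOn_uabOnPeriod (ha : 0 ≤ a) (hab : a < b) (x : E) :
    ContinuousOn (fun τ => uabOnPeriod s sa a b τ x) (Icc 0 (b - a)) := by
  have hs : ContinuousOn (fun τ : ℝ => s (a + τ) (sa a x - sa b x)) (Icc 0 (b - a)) :=
    (H.continuousOn _).comp (by fun_prop) fun τ hτ => mem_Ici.2 (by linarith [hτ.1])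
  have hsa : ContinuousOn (fun τ : ℝ => sa (b - τ) x) (Icc 0 (b - a)) :=
    (H.continuousOn_sa x).comp (by fun_prop) fun τ hτ => mem_Ici.2 (by linarith [hτ.2])
  exact hs.add (((H.continuous_s ha).comp_continuousOn hsa).sub
    ((H.continuous_s (ha.trans hab.le)).comp_continuousOn hsa))

lemma intervalIntegrable_uab (ha : 0 ≤ a) (hab : a < b) (x : E) :
    IntervalIntegrable (fun t => uab s sa a b t x) volume 0 (b - a) :=
  ((H.continuousOn_uabOnPeriod ha hab x).congr fun _ ht =>
    H.uab_eq_uabOnPeriod ha hab ht x).intervalIntegrable_of_Icc (sub_pos.2 hab).le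

lemma qab_add (ha : 0 ≤ a) (hab : a < b) (x y : E) :
    qab s sa a b (x + y) = qab s sa a b x + qab s sa a b y := by
  simp only [qab, map_add]
  rw [intervalIntegral.integral_add (H.intervalIntegrable_uab ha hab x)
    (H.intervalIntegrable_uab ha hab y), smul_add]

variable [CompleteSpace E]

lemma uab_qab (ha : 0 ≤ a) (hab : a < b) (r : ℝ) (x : E) :
    uab s sa a b r (qab s sa a b x) = qab s sa a b x := by
  rw [qab, LinearMap.map_smul_of_tower, LinearMap.map_intervalIntegral_of_bound
    (H.norm_uab_le ha hab r) (H.intervalIntegrable_uab ha hab x)]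
  simp only [H.uab_uab ha hab]
  rw [intervalIntegral.integral_comp_add_left (fun t => uab s sa a b t x), add_zero,
    (uab_periodic hab x).intervalIntegral_add_eq r 0, zero_add]

lemma qab_qab (ha : 0 ≤ a) (hab : a < b) (x : E) :
    qab s sa a b (qab s sa a b x) = qab s sa a b x := by
  rw [qab]
  simp only [H.uab_qab ha hab]
  rw [intervalIntegral.integral_const, sub_zero, smul_smul,
    inv_mul_cancel₀ (sub_pos.2 hab).ne', one_smul]

lemma inner_qab_left (ha : 0 ≤ a) (hab : a < b) (x y : E) :
    ⟪qab s sa a b x, y⟫ = ⟪x, qab s sa a b y⟫ := by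
  have hL := (sub_pos.2 hab).le
  have hint (z : E) : IntervalIntegrable (fun t => uabOnPeriod s sa a b t z) volume 0 (b - a) :=
    (H.continuousOn_uabOnPeriod ha hab z).intervalIntegrable_of_Icc hL
  rw [H.qab_eq_integral_uabOnPeriod ha hab, H.qab_eq_integral_uabOnPeriod ha hab,
    CStarModule.inner_smul_left_real, CStarModule.inner_smul_right_real,
    CStarModule.inner_intervalIntegral_left (hint x),
    CStarModule.inner_intervalIntegral_right (hint y)]
  congr 1
  calc ∫ t in (0 : ℝ)..(b - a), ⟪uabOnPeriod s sa a b t x, y⟫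
      = ∫ t in (0 : ℝ)..(b - a), ⟪x, uabOnPeriod s sa a b (b - a - t) y⟫ :=
        intervalIntegral.integral_congr fun t ht => by
          rw [uIcc_of_le hL] at ht
          exact H.inner_uabOnPeriod_left ha hab ht.1 ht.2 x y
    _ = ∫ t in (0 : ℝ)..(b - a), ⟪x, uabOnPeriod s sa a b t y⟫ := by
        simpa using intervalIntegral.integral_comp_sub_left
          (fun t => ⟪x, uabOnPeriod s sa a b t y⟫) (b - a) (a := 0) (b := b - a)

lemma pab_qab (ha : 0 ≤ a) (hab : a < b) (x : E) :
    pab s sa a b (qab s sa a b x) = qab s sa a b x := by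
  have hL := (sub_pos.2 hab).le
  rw [H.qab_eq_integral_uabOnPeriod ha hab, LinearMap.map_smul_of_tower,
    LinearMap.map_intervalIntegral_of_bound (H.norm_pab_le ha hab)
      ((H.continuousOn_uabOnPeriod ha hab x).intervalIntegrable_of_Icc hL)]
  congr 1
  refine intervalIntegral.integral_congr fun t ht => ?_
  rw [uIcc_of_le hL] at ht
  exact H.pab_uabOnPeriod ha hab ht.1 ht.2 x

end IsIsometrySemigroup

theorem qab_is_invariant_mean_projection
    [CompleteSpace E]
    (s sa : ℝ → E →ₗ[ℂ] E)
    (hs0 : s 0 = LinearMap.id)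
    (hsg : ∀ r t : ℝ, 0 ≤ r → 0 ≤ t → s (r + t) = (s r).comp (s t))
    (hiso : ∀ t : ℝ, 0 ≤ t → ∀ x y : E, ⟪s t x, s t y⟫ = ⟪x, y⟫)
    (hadj : ∀ t : ℝ, 0 ≤ t → ∀ x y : E, ⟪s t x, y⟫ = ⟪x, sa t y⟫)
    (hsc : ∀ x : E, ContinuousOn (fun t : ℝ => s t x) (Set.Ici 0))
    (a b : ℝ) (ha : 0 ≤ a) (hab : a < b) :
    (∀ r : ℝ, ∀ x : E, uab s sa a b r (qab s sa a b x) = qab s sa a b x) ∧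
    (∀ x y : E, qab s sa a b (x + y) = qab s sa a b x + qab s sa a b y) ∧
    (∀ (c : ℂ) (x : E), qab s sa a b (c • x) = c • qab s sa a b x) ∧
    (∀ x : E, qab s sa a b (qab s sa a b x) = qab s sa a b x) ∧
    (∀ x y : E, ⟪qab s sa a b x, y⟫ = ⟪x, qab s sa a b y⟫) ∧
    (∀ x : E, ∃ y : E, qab s sa a b x = pab s sa a b y) := by
  have H : IsIsometrySemigroup A s sa := ⟨hs0, hsg, hiso, hadj, hsc⟩
  exact ⟨H.uab_qab ha hab, H.qab_add ha hab, qab_smul s sa a b, H.qab_qab ha hab,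
    H.inner_qab_left ha hab, fun x => ⟨qab s sa a b x, (H.pab_qab ha hab x).symm⟩⟩
end
end
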